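/- arXiv:0812.1779 — 4 statements merged into one kernel-verified Lean document; each statement's English description precedes it below -/
import Mathlib

section
/- Let A be a real n×n matrix, let λ : Fin n → ℝ be an injective family of eigenvalues of A, and for each j let v_j be a nonzero right eigenvector (A v_j = λ_j v_j) and u_j a nonzero left eigenvector (u_j A = λ_j u_j). Then for every j the inner product u_j ⬝ v_j is nonzero. -/
/-!
A left eigenvector for `μ` is orthogonal to every right eigenvector for an eigenvalue `ν ≠ μ`,
since `μ (u ⬝ᵥ v) = uA ⬝ᵥ v = u ⬝ᵥ Av = ν (u ⬝ᵥ v)`. With `n` distinct eigenvalues the right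
eigenvectors `v i` form a basis, so `u j ⬝ᵥ v j = 0` would make `u j` orthogonal to the whole
space, i.e. `u j = 0`.
-/

namespace Matrix

variable {R K n ι : Type*} [Fintype n]

theorem dotProduct_eq_zero_of_eigenvalue_ne [CommRing R] [NoZeroDivisors R] {A : Matrix n n R}
    {μ ν : R} {u v : n → R} (hu : u ᵥ* A = μ • u) (hv : A *ᵥ v = ν • v) (hμν : μ ≠ ν) :
    u ⬝ᵥ v = 0 := by
  have h : μ * (u ⬝ᵥ v) = ν * (u ⬝ᵥ v) := by
    rw [← smul_eq_mul, ← smul_dotProduct, ← hu, ← dotProduct_mulVec, hv, dotProduct_smul,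
      smul_eq_mul]
  exact (mul_eq_mul_right_iff.mp h).resolve_left hμν

theorem eq_zero_of_dotProduct_eq_zero_of_span_eq_top [CommSemiring R] {s : ι → n → R}
    (hs : Submodule.span R (Set.range s) = ⊤) {u : n → R} (hu : ∀ i, u ⬝ᵥ s i = 0) : u = 0 := by
  have hker : Submodule.span R (Set.range s) ≤ LinearMap.ker (dotProductBilin R R u) :=
    Submodule.span_le.mpr <| Set.range_subset_iff.mpr hu
  refine dotProduct_eq_zero u fun w => ?_
  simpa using hker (hs ▸ Submodule.mem_top : w ∈ Submodule.span R (Set.range s))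

theorem span_eigenvectors_eq_top [Field K] [Nonempty n] {A : Matrix n n K} {μ : n → K}
    (hμ : Function.Injective μ) {v : n → n → K} (hv_ne : ∀ i, v i ≠ 0)
    (hv : ∀ i, A *ᵥ v i = μ i • v i) : Submodule.span K (Set.range v) = ⊤ := by
  have hli : LinearIndependent K v :=
    Module.End.eigenvectors_linearIndependent' A.mulVecLin μ hμ v fun i =>
      ⟨Module.End.mem_eigenspace_iff.mpr (hv i), hv_ne i⟩
  exact hli.span_eq_top_of_card_eq_finrank (Module.finrank_fintype_fun_eq_card K).symm

end Matrix

/-- If `A` is a real `n × n` matrix with `n` distinct real eigenvalues `eig j`,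
`v j` a nonzero right eigenvector and `u j` a nonzero left eigenvector for `eig j`,
then `u j ⬝ᵥ v j ≠ 0` for every `j`. -/
theorem left_right_eigenvector_dotProduct_ne_zero
    {n : ℕ} (A : Matrix (Fin n) (Fin n) ℝ)
    (eig : Fin n → ℝ) (heig : Function.Injective eig)
    (v u : Fin n → Fin n → ℝ)
    (hv_ne : ∀ j, v j ≠ 0)
    (hu_ne : ∀ j, u j ≠ 0)
    (hv : ∀ j, A.mulVec (v j) = eig j • v j)
    (hu : ∀ j, Matrix.vecMul (u j) A = eig j • u j) :
    ∀ j, dotProduct (u j) (v j) ≠ 0 := by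
  intro j huv
  have : Nonempty (Fin n) := ⟨j⟩
  refine hu_ne j <| Matrix.eq_zero_of_dotProduct_eq_zero_of_span_eq_top
    (Matrix.span_eigenvectors_eq_top heig hv_ne hv) fun i => ?_
  rcases eq_or_ne i j with rfl | hij
  · exact huv
  · exact Matrix.dotProduct_eq_zero_of_eigenvalue_ne (hu j) (hv i) (heig.ne hij.symm)
end

section
/- For n ≥ 1, let A_n be the n×n real matrix with (A_n)_{01} = 1, (A_n)_{k,k−1} = (A_n)_{k,k+1} = 1/2 for 1 ≤ k ≤ n−1 (indices within range), and all other entries 0. Then the spectrum of A_n is exactly the set of the n distinct values {cos((2k+1)π/(2n)) : k = 0, 1, …, n−1}. -/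
/-!
For `cos (n θ) = 0` the vector `(cos (i θ))_{i < n}` is an eigenvector of the restricted kernel with
eigenvalue `cos θ`: row `0` reads `cos θ = cos θ · cos 0`, an interior row is the identity
`(cos ((i-1) θ) + cos ((i+1) θ)) / 2 = cos θ · cos (i θ)`, and in the last row the missing
neighbour `cos (n θ)` vanishes anyway. The angles `θ = (2k+1)π/(2n)`, `k < n`, lie in `[0, π]`
and give `n` distinct eigenvalues, which exhaust the spectrum of an `n × n` matrix.
-/

open Real

/-- The reflecting simple random walk kernel on `ℕ`. -/
noncomputable def Pch (i j : ℕ) : ℝ :=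
  if i = 0 then (if j = 1 then 1 else 0)
  else if j = i - 1 ∨ j = i + 1 then 1 / 2 else 0

open Finset Matrix Polynomial

namespace Matrix

variable {ι K : Type*} [Fintype ι] [DecidableEq ι] [Field K]

theorem spectrum_eq_of_subset_of_card_le {A : Matrix ι ι K} {s : Finset K}
    (hs : ↑s ⊆ spectrum K A) (hcard : Fintype.card ι ≤ #s) : spectrum K A = s := by
  classical
  have hroots : spectrum K A = ↑A.charpoly.roots.toFinset := by
    ext x
    simp [mem_spectrum_iff_isRoot_charpoly, A.charpoly_monic.ne_zero]
  rw [hroots] at hs ⊢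
  norm_cast at hs ⊢
  refine (Finset.eq_of_subset_of_card_le hs ?_).symm
  calc #A.charpoly.roots.toFinset ≤ Multiset.card A.charpoly.roots := Multiset.toFinset_card_le _
    _ ≤ A.charpoly.natDegree := card_roots' _
    _ = Fintype.card ι := A.charpoly_natDegree_eq_dim
    _ ≤ #s := hcard

theorem mem_spectrum_of_mulVec_eq_smul {A : Matrix ι ι K} {v : ι → K} {μ : K} (hv : v ≠ 0)
    (h : A *ᵥ v = μ • v) : μ ∈ spectrum K A := by
  rw [← spectrum_toLin']
  exact Module.End.HasEigenvalue.mem_spectrum <| Module.End.hasEigenvalue_of_hasEigenvector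
    ⟨Module.End.mem_eigenspace_iff.mpr (by rwa [toLin'_apply]), hv⟩

end Matrix

theorem Pch_of_ne_zero {i : ℕ} (hi : i ≠ 0) (j : ℕ) :
    Pch i j = (if j = i - 1 then 1 / 2 else 0) + (if j = i + 1 then 1 / 2 else 0) := by
  unfold Pch
  split_ifs <;> first | omega | norm_num

theorem sum_range_Pch_mul {N i : ℕ} (hi : i + 1 < N) (f : ℕ → ℝ) :
    ∑ j ∈ range N, Pch i j * f j = if i = 0 then f 1 else (f (i - 1) + f (i + 1)) / 2 := by
  split_ifs with h0
  · simp [Pch, h0, show 1 < N by omega]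
  · simp only [Pch_of_ne_zero h0, add_mul, ite_mul, zero_mul, sum_add_distrib, sum_ite_eq',
      mem_range, show i - 1 < N by omega, hi, if_true]
    ring

theorem sum_range_Pch_mul_cos {N i : ℕ} (hi : i + 1 < N) (θ : ℝ) :
    ∑ j ∈ range N, Pch i j * cos (j * θ) = cos θ * cos (i * θ) := by
  rw [sum_range_Pch_mul hi]
  split_ifs with h0
  · simp [h0]
  · have hcast : ((i - 1 : ℕ) : ℝ) * θ = i * θ - θ := by
      rw [Nat.cast_sub (by omega)]; ring
    rw [hcast, Nat.cast_succ, add_mul, one_mul, cos_sub, cos_add]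
    ring

theorem Pch_restriction_mulVec_cos {n : ℕ} {θ : ℝ} (hθ : cos (n * θ) = 0) :
    (of fun i j : Fin n => Pch i j) *ᵥ (fun i => cos (i * θ)) =
      cos θ • fun i : Fin n => cos (i * θ) := by
  funext i
  -- adding the vanishing term `j = n` turns the last row into a full row of the kernel
  have hrow : ∑ j ∈ range n, Pch i j * cos (j * θ) =
      ∑ j ∈ range (n + 1), Pch i j * cos (j * θ) := by
    rw [sum_range_succ, hθ, mul_zero, add_zero]
  simp only [mulVec, dotProduct, of_apply, Pi.smul_apply, smul_eq_mul]
  rw [Fin.sum_univ_eq_sum_range (fun j => Pch i j * cos (j * θ)), hrow,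
    sum_range_Pch_mul_cos (by omega)]

theorem odd_mul_pi_div_mem_Icc {n k : ℕ} (hk : k < n) :
    (2 * k + 1) * π / (2 * n) ∈ Set.Icc 0 π := by
  have hk' : (2 * k + 1 : ℝ) ≤ 2 * n := by exact_mod_cast (by omega : 2 * k + 1 ≤ 2 * n)
  have hn : (0 : ℝ) < 2 * n := by linarith
  refine ⟨by positivity, ?_⟩
  rw [div_le_iff₀ hn]
  nlinarith [pi_pos]

theorem injOn_cos_odd_mul_pi_div (n : ℕ) :
    Set.InjOn (fun k : ℕ => cos ((2 * k + 1) * π / (2 * n))) (Set.Iio n) := by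
  intro k hk l hl h
  have := injOn_cos (odd_mul_pi_div_mem_Icc hk) (odd_mul_pi_div_mem_Icc hl) h
  have hn : (n : ℝ) ≠ 0 := by
    have : 0 < n := by simp only [Set.mem_Iio] at hk; omega
    positivity
  field_simp at this
  exact_mod_cast (by linarith [pi_pos] : (k : ℝ) = l)

theorem cos_odd_mul_pi_div_mem_spectrum {n k : ℕ} (hk : k < n) :
    cos ((2 * k + 1) * π / (2 * n)) ∈ spectrum ℝ (of fun i j : Fin n => Pch i j) := by
  have hn : (n : ℝ) ≠ 0 := by exact_mod_cast (by omega : n ≠ 0)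
  have hθ : cos (n * ((2 * k + 1) * π / (2 * n))) = 0 :=
    cos_eq_zero_iff.mpr ⟨k, by push_cast; field_simp⟩
  refine mem_spectrum_of_mulVec_eq_smul ?_ (Pch_restriction_mulVec_cos hθ)
  intro hv
  simpa using congrFun hv ⟨0, by omega⟩

theorem spectrum_restriction_reflecting_walk_general (n : ℕ) :
    spectrum ℝ (Matrix.of fun i j : Fin n => Pch i j)
        = {x : ℝ | ∃ k : ℕ, k < n ∧ x = Real.cos ((2 * k + 1) * π / (2 * n))} ∧
      ∀ k l : ℕ, k < n → l < n →
        Real.cos ((2 * k + 1) * π / (2 * n)) = Real.cos ((2 * l + 1) * π / (2 * n)) →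
          k = l := by
  set s := (range n).image fun k : ℕ => cos ((2 * k + 1) * π / (2 * n))
  have hinj := injOn_cos_odd_mul_pi_div n
  have hcard : #s = n := by
    rw [card_image_of_injOn (by simpa [Set.InjOn] using hinj), card_range]
  have hs : ↑s ⊆ spectrum ℝ (of fun i j : Fin n => Pch i j) := by
    simpa [s, Set.subset_def] using fun k hk => cos_odd_mul_pi_div_mem_spectrum hk
  refine ⟨?_, fun k l hk hl => @hinj k hk l hl⟩
  rw [spectrum_eq_of_subset_of_card_le hs (by rw [Fintype.card_fin, hcard])]
  ext x
  simp [s, eq_comm]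

/-- The spectrum of the `n × n` restriction of the reflecting simple random walk kernel
is exactly the set of the `n` distinct values `cos((2k+1)π/(2n))`, `k = 0, …, n-1`. -/
theorem spectrum_restriction_reflecting_walk (n : ℕ) (hn : 1 ≤ n) :
    spectrum ℝ (Matrix.of fun i j : Fin n => Pch i j)
        = {x : ℝ | ∃ k : ℕ, k < n ∧ x = Real.cos ((2 * k + 1) * π / (2 * n))} ∧
      ∀ k l : ℕ, k < n → l < n →
        Real.cos ((2 * k + 1) * π / (2 * n)) = Real.cos ((2 * l + 1) * π / (2 * n)) →
          k = l :=
  spectrum_restriction_reflecting_walk_general n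
end

section
/- For every continuous function f : ℝ → ℝ, the averages (1/n) Σ_{k=0}^{n−1} f(cos((2k+1)π/(2n))) converge, as n → ∞, to (1/π) ∫_{−1}^{1} f(x) / √(1 − x²) dx. Equivalently, the uniform probability measure on the roots {cos((2k+1)π/(2n)) : k = 0,…,n−1} of the n-th Chebyshev polynomial converges weakly to the arcsine distribution with density 1/(π√(1−x²)) on [−1,1]. -/
/-!
Substituting `x = cos θ` turns the arcsine integral into `(1/π) ∫₀^π f (cos θ) dθ`, and the
Chebyshev roots are the images under `cos` of the midpoints `(2k+1)π/(2n)` of the `n` equal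
subintervals of `[0, π]`. The averages are thus midpoint Riemann sums of the continuous function
`θ ↦ f (cos θ)`, which converge by uniform continuity.
-/

open Real Filter MeasureTheory Set Finset

section RiemannSum

variable {E : Type*} [NormedAddCommGroup E] [NormedSpace ℝ E] [CompleteSpace E]

theorem norm_riemannSum_sub_integral_le {g : ℝ → E} (hg : ContinuousOn g (Icc 0 1)) {n : ℕ}
    (hn : 0 < n) {t : ℕ → ℝ} (ht : ∀ k < n, t k ∈ Icc (k / n : ℝ) ((k + 1) / n)) {ε : ℝ}
    (hε : ∀ x ∈ Icc (0 : ℝ) 1, ∀ y ∈ Icc (0 : ℝ) 1, dist x y ≤ 1 / n → dist (g x) (g y) ≤ ε) :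
    ‖(1 / n : ℝ) • ∑ k ∈ range n, g (t k) - ∫ x in (0 : ℝ)..1, g x‖ ≤ ε := by
  set a : ℕ → ℝ := fun k => k / n
  have hn' : (0 : ℝ) < n := Nat.cast_pos.mpr hn
  have hstep (k : ℕ) : a (k + 1) - a k = 1 / n := by
    simp only [a]; push_cast; ring
  have ha_mem {k : ℕ} (hk : k < n) : Icc (a k) (a (k + 1)) ⊆ Icc 0 1 := by
    refine Icc_subset_Icc (by positivity) ?_
    rw [div_le_one hn']
    exact_mod_cast hk
  have hsplit : ∫ x in (0 : ℝ)..1, g x = ∑ k ∈ range n, ∫ x in a k..a (k + 1), g x := by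
    rw [intervalIntegral.sum_integral_adjacent_intervals fun k hk =>
      (hg.mono (ha_mem hk)).intervalIntegrable_of_Icc (by linarith [hstep k, one_div_pos.2 hn'])]
    simp [a, hn'.ne']
  have hpiece {k : ℕ} (hk : k < n) :
      ‖(1 / n : ℝ) • g (t k) - ∫ x in a k..a (k + 1), g x‖ ≤ ε * (1 / n) := by
    have hle : a k ≤ a (k + 1) := by linarith [hstep k, one_div_pos.2 hn']
    have hint : IntervalIntegrable g volume (a k) (a (k + 1)) :=
      (hg.mono (ha_mem hk)).intervalIntegrable_of_Icc hle
    rw [← hstep k, ← intervalIntegral.integral_const, ← intervalIntegral.integral_sub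
      intervalIntegrable_const hint]
    refine (intervalIntegral.norm_integral_le_of_norm_le_const fun x hx => ?_).trans_eq
      (by rw [hstep k, abs_of_pos (one_div_pos.2 hn')])
    rw [uIoc_of_le hle] at hx
    have htk : t k ∈ Icc (a k) (a (k + 1)) := by simpa only [a, Nat.cast_succ] using ht k hk
    rw [← dist_eq_norm]
    refine hε _ (ha_mem hk htk) _ (ha_mem hk (Ioc_subset_Icc_self hx)) ?_
    rw [Real.dist_eq, abs_le]
    constructor <;> linarith [hstep k, htk.1, htk.2, hx.1, hx.2]
  calc ‖(1 / n : ℝ) • ∑ k ∈ range n, g (t k) - ∫ x in (0 : ℝ)..1, g x‖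
      = ‖∑ k ∈ range n, ((1 / n : ℝ) • g (t k) - ∫ x in a k..a (k + 1), g x)‖ := by
        rw [hsplit, Finset.smul_sum, Finset.sum_sub_distrib]
    _ ≤ ∑ _k ∈ range n, ε * (1 / n) :=
        (norm_sum_le _ _).trans (Finset.sum_le_sum fun k hk => hpiece (Finset.mem_range.1 hk))
    _ = ε := by
        rw [Finset.sum_const, Finset.card_range, nsmul_eq_mul]
        field_simp

theorem tendsto_riemannSum_integral {g : ℝ → E} (hg : ContinuousOn g (Icc 0 1))
    {t : ℕ → ℕ → ℝ} (ht : ∀ n : ℕ, ∀ k < n, t n k ∈ Icc (k / n : ℝ) ((k + 1) / n)) :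
    Tendsto (fun n : ℕ => (1 / n : ℝ) • ∑ k ∈ range n, g (t n k)) atTop
      (nhds (∫ x in (0 : ℝ)..1, g x)) := by
  rw [Metric.tendsto_atTop]
  intro ε hε
  obtain ⟨δ, hδ, hgδ⟩ := Metric.uniformContinuousOn_iff_le.1
    (isCompact_Icc.uniformContinuousOn_of_continuous hg) (ε / 2) (half_pos hε)
  obtain ⟨N, hN⟩ := exists_nat_one_div_lt hδ
  refine ⟨N + 1, fun n hn => ?_⟩
  have hn' : ((N : ℝ) + 1) ≤ n := by exact_mod_cast hn
  have hmesh : (1 : ℝ) / n ≤ δ :=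
    (one_div_le_one_div_of_le (by positivity) hn').trans hN.le
  rw [dist_eq_norm]
  exact (norm_riemannSum_sub_integral_le hg (by omega) (ht n) fun x hx y hy hxy =>
    hgδ x hx y hy (hxy.trans hmesh)).trans_lt (half_lt_self hε)

end RiemannSum

theorem integral_comp_cos {E : Type*} [NormedAddCommGroup E] [NormedSpace ℝ E] (f : ℝ → E) :
    ∫ θ in (0 : ℝ)..π, f (cos θ) = ∫ x in (-1 : ℝ)..1, (√(1 - x ^ 2))⁻¹ • f x := by
  have hweight : EqOn (fun θ => |-sin θ| • (√(1 - cos θ ^ 2))⁻¹ • f (cos θ))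
      (fun θ => f (cos θ)) (Ioo 0 π) := fun θ hθ => by
    have hsin := sin_pos_of_pos_of_lt_pi hθ.1 hθ.2
    simp only [← sin_sq, sqrt_sq hsin.le, abs_neg, abs_of_pos hsin, smul_smul,
      mul_inv_cancel₀ hsin.ne', one_smul]
  calc ∫ θ in (0 : ℝ)..π, f (cos θ)
      = ∫ θ in Ioo 0 π, |-sin θ| • (√(1 - cos θ ^ 2))⁻¹ • f (cos θ) := by
        rw [intervalIntegral.integral_of_le pi_pos.le, integral_Ioc_eq_integral_Ioo,
          setIntegral_congr_fun measurableSet_Ioo hweight]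
    _ = ∫ x in cos '' Icc 0 π, (√(1 - x ^ 2))⁻¹ • f x := by
        rw [integral_image_eq_integral_abs_deriv_smul measurableSet_Icc
          (fun θ _ => (hasDerivAt_cos θ).hasDerivWithinAt) injOn_cos,
          integral_Icc_eq_integral_Ioo]
    _ = ∫ x in (-1 : ℝ)..1, (√(1 - x ^ 2))⁻¹ • f x := by
        rw [bijOn_cos.image_eq, intervalIntegral.integral_of_le (by norm_num),
          integral_Icc_eq_integral_Ioc]

/-- The uniform measure on the Chebyshev roots `cos((2k+1)π/(2n))`, `k = 0, …, n-1`,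
converges weakly to the arcsine distribution: for every continuous `f : ℝ → ℝ`,
`(1/n) ∑_{k<n} f(cos((2k+1)π/(2n))) → (1/π) ∫_{-1}^{1} f x / √(1-x²) dx`. -/
theorem chebyshev_roots_weak_convergence_arcsine (f : ℝ → ℝ) (hf : Continuous f) :
    Tendsto
      (fun n : ℕ =>
        (1 / (n : ℝ)) * ∑ k ∈ Finset.range n, f (Real.cos ((2 * k + 1) * π / (2 * n))))
      atTop
      (nhds ((1 / π) * ∫ x in (-1 : ℝ)..1, f x / Real.sqrt (1 - x ^ 2))) := by
  have hmidpoint (n : ℕ) (k : ℕ) (hk : k < n) :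
      (2 * k + 1) / (2 * n : ℝ) ∈ Icc (k / n : ℝ) ((k + 1) / n) := by
    have hn : (0 : ℝ) < n := by exact_mod_cast (Nat.zero_lt_of_lt hk)
    constructor <;> rw [div_le_div_iff₀ (by positivity) (by positivity)] <;> nlinarith
  have hriemann := tendsto_riemannSum_integral (g := fun t => f (cos (t * π)))
    (by fun_prop) hmidpoint
  rw [intervalIntegral.integral_comp_mul_right (fun θ => f (cos θ)) pi_ne_zero, zero_mul,
    one_mul, integral_comp_cos] at hriemann
  simpa only [smul_eq_mul, div_mul_eq_mul_div, inv_mul_eq_div, one_div] using hriemann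
end

section
/- Let P_ch be the reflecting simple random walk kernel and define p_t(i,j) recursively by p_0(i,j) = δ_{ij} and p_{t+1}(i,j) = Σ_k p_t(i,k) P_ch(k,j). Let π_0 = 1 and π_j = 2 for j ≥ 1, and let T_k denote the k-th Chebyshev polynomial of the first kind. Then for all t, i, j: p_t(i,j) = π_j · (1/π) ∫_{−1}^{1} λ^t T_i(λ) T_j(λ) / √(1 − λ²) dλ. -/
/-!
Write `μ` for the Chebyshev measure `dλ / √(1 - λ²)` on `[-1, 1]` (`measureT`) and `π_j` for
the weights of the statement. The Chebyshev polynomials are orthogonal for `μ` with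
`∫ T_j² dμ = π / π_j`, which gives the case `t = 0`. The three-term recurrence
`2 λ T_j = T_{j-1} + T_{j+1}` (and `λ T_0 = T_1`) says that `k ↦ π_k T_k(λ)` is a left
eigenvector of `P_ch` with eigenvalue `λ`; since each column of `P_ch` has two nonzero entries,
the sum over `k` may be moved inside the integral, so the right-hand side satisfies the same
recursion in `t` as `p_t`.
-/

open Real

open MeasureTheory Polynomial Polynomial.Chebyshev

lemma Pch_eq_zero_of_ne {k j : ℕ} (hk : k ≠ j - 1) (hk' : k ≠ j + 1) : Pch k j = 0 := by
  unfold Pch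
  split_ifs <;> first | rfl | omega

lemma tsum_mul_Pch (f : ℕ → ℝ) (j : ℕ) :
    ∑' k, f k * Pch k j = f (j - 1) * Pch (j - 1) j + f (j + 1) * Pch (j + 1) j := by
  rw [tsum_eq_sum (s := {j - 1, j + 1}), Finset.sum_pair (by omega)]
  intro k hk
  simp only [Finset.mem_insert, Finset.mem_singleton, not_or] at hk
  rw [Pch_eq_zero_of_ne hk.1 hk.2, mul_zero]

lemma integral_tsum_mul_Pch {α : Type*} [MeasurableSpace α] {μ : Measure α} {f : ℕ → α → ℝ}
    (hf : ∀ k, Integrable (f k) μ) (j : ℕ) :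
    ∑' k, (∫ x, f k x ∂μ) * Pch k j = ∫ x, ∑' k, f k x * Pch k j ∂μ := by
  simp only [tsum_mul_Pch]
  rw [integral_add ((hf _).mul_const _) ((hf _).mul_const _), integral_mul_const,
    integral_mul_const]

/-- The weight `π_j`, i.e. `π / ∫ T_j² dμ`; it is also the reversing measure of `Pch`. -/
noncomputable def chebWeight (j : ℕ) : ℝ := if j = 0 then 1 else 2

lemma chebWeight_mul_integral_T_mul_T (i j : ℕ) :
    chebWeight j * ∫ x, (T ℝ i).eval x * (T ℝ j).eval x ∂measureT = if i = j then π else 0 := by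
  rcases eq_or_ne i j with rfl | hij
  · rcases eq_or_ne i 0 with rfl | hi
    · simpa [chebWeight] using integral_eval_T_real_mul_self_measureT_zero
    · rw [integral_T_real_mul_self_measureT_of_ne_zero hi]
      simp only [chebWeight, hi, if_false, if_true]
      ring
  · simp [integral_eval_T_real_mul_eval_T_real_measureT_of_ne hij, hij]

lemma tsum_chebWeight_mul_T_mul_Pch (x : ℝ) (j : ℕ) :
    ∑' k, chebWeight k * (T ℝ k).eval x * Pch k j = x * (chebWeight j * (T ℝ j).eval x) := by
  rw [tsum_mul_Pch]
  match j with
  | 0 =>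
    simp only [chebWeight, Pch]
    grind [T_zero, T_one, eval_one, eval_X]
  | n + 1 =>
    have h := congrArg (eval x) (T_add_one ℝ (n + 1))
    simp only [eval_sub, eval_mul, eval_ofNat, eval_X, add_sub_cancel_right] at h
    simp only [chebWeight, Pch]
    grind

noncomputable def chebyshevKernel (t i j : ℕ) : ℝ :=
  chebWeight j / π * ∫ x, x ^ t * (T ℝ i).eval x * (T ℝ j).eval x ∂measureT

lemma chebyshevKernel_zero (i j : ℕ) : chebyshevKernel 0 i j = if i = j then 1 else 0 := by
  simp only [chebyshevKernel, pow_zero, one_mul]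
  rw [div_mul_eq_mul_div, chebWeight_mul_integral_T_mul_T]
  split_ifs <;> simp [Real.pi_ne_zero]

lemma chebyshevKernel_eq_integral (t i j : ℕ) :
    chebyshevKernel t i j =
      ∫ x, π⁻¹ * (x ^ t * (T ℝ i).eval x) * (chebWeight j * (T ℝ j).eval x) ∂measureT := by
  rw [chebyshevKernel, ← integral_const_mul]
  congr 1 with x
  ring

lemma chebyshevKernel_succ (t i j : ℕ) :
    chebyshevKernel (t + 1) i j = ∑' k, chebyshevKernel t i k * Pch k j := by
  have hintegrable (k : ℕ) : Integrable
      (fun x ↦ π⁻¹ * (x ^ t * (T ℝ i).eval x) * (chebWeight k * (T ℝ k).eval x)) measureT :=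
    integrable_measureT (by fun_prop)
  simp_rw [chebyshevKernel_eq_integral, integral_tsum_mul_Pch hintegrable, mul_assoc,
    tsum_mul_left, ← mul_assoc (chebWeight _), tsum_chebWeight_mul_T_mul_Pch]
  congr 1 with x
  ring

lemma intervalIntegral_div_sqrt_eq_integral_measureT (f : ℝ → ℝ) :
    ∫ x in (-1 : ℝ)..1, f x / √(1 - x ^ 2) = ∫ x, f x ∂measureT := by
  simp_rw [integral_measureT, div_eq_mul_inv, Real.sqrt_inv]

/-- Karlin–McGregor representation of the `t`-step transition probabilities of the
reflecting simple random walk via Chebyshev polynomials of the first kind: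
`p_t(i,j) = π_j (1/π) ∫_{-1}^{1} λ^t T_i(λ) T_j(λ) / √(1-λ²) dλ`,
with `π_0 = 1` and `π_j = 2` for `j ≥ 1`. -/
theorem reflecting_walk_karlin_mcgregor_chebyshev
    (p : ℕ → ℕ → ℕ → ℝ)
    (hp0 : ∀ i j : ℕ, p 0 i j = if i = j then 1 else 0)
    (hpstep : ∀ t i j : ℕ, p (t + 1) i j = ∑' k : ℕ, p t i k * Pch k j) :
    ∀ t i j : ℕ,
      p t i j = (if j = 0 then (1 : ℝ) else 2) * (1 / π) *
        ∫ l in (-1 : ℝ)..1,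
          l ^ t * (Polynomial.Chebyshev.T ℝ i).eval l * (Polynomial.Chebyshev.T ℝ j).eval l
            / Real.sqrt (1 - l ^ 2) := by
  have hp : p = chebyshevKernel := by
    funext t
    induction t with
    | zero => funext i j; rw [hp0, chebyshevKernel_zero]
    | succ t ih => funext i j; rw [hpstep, chebyshevKernel_succ, ih]
  intro t i j
  rw [hp, chebyshevKernel, intervalIntegral_div_sqrt_eq_integral_measureT, one_div, div_eq_mul_inv]
  rfl
end
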